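/- (Proposition 1, LH++ model) The loss exceedance probability satisfies P(L > α) = ∑_{k=0}^n C(n,k) · P(V ≤ A(α,k), X_1 ≤ c_0, …, X_k ≤ c_0, X_{k+1} > c_0, …, X_n > c_0), where C(n,k) is the binomial coefficient. -/

import Mathlib

open MeasureTheory ProbabilityTheory

/-- The standard normal cumulative distribution function `Φ`. -/
noncomputable def Phi (x : ℝ) : ℝ := (gaussianReal 0 1 (Set.Iic x)).toReal

/-- The inverse of the standard normal cdf. -/
noncomputable def PhiInv : ℝ → ℝ := Function.invFun Phi

/-- The threshold `A(α,k) = (c − √(1−ρ)·Φ⁻¹(0 ∨ (1 ∧ (α − k·N₀(1−R₀))/(N(1−R)))))/√ρ`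
in the extended reals, with the conventions `Φ⁻¹(0) = −∞` (so `A = +∞`) and
`Φ⁻¹(1) = +∞` (so `A = −∞`). -/
noncomputable def Athr (c ρ N R N0 R0 α : ℝ) (k : ℕ) : EReal :=
  if max 0 (min 1 ((α - k * N0 * (1 - R0)) / (N * (1 - R)))) ≤ 0 then ⊤
  else if 1 ≤ max 0 (min 1 ((α - k * N0 * (1 - R0)) / (N * (1 - R)))) then ⊥
  else ((c - Real.sqrt (1 - ρ) *
      PhiInv (max 0 (min 1 ((α - k * N0 * (1 - R0)) / (N * (1 - R)))))) / Real.sqrt ρ : ℝ)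

/-!
On the event that exactly the obligors in `s` default, the loss is `#s · N₀(1 − R₀)` plus
`N(1 − R) · Φ((c − √ρ V)/√(1 − ρ))`, a strictly decreasing function of `V`; so there `L > α`
iff `V ≤ A(α, #s)`, up to the null event that `V` hits the threshold. Permuting the
idiosyncratic factors `ξᵢ` preserves the joint law of `(V, ξ)`, so the probability of
`V ≤ A` together with a given default pattern depends only on the size of the pattern, and
grouping the `2ⁿ` patterns by size produces the binomial coefficients.
-/

open Set Filter

section Cdf

variable {μ : Measure ℝ} [IsProbabilityMeasure μ]

lemma continuous_cdf_of_nullSingletonClass [NullSingletonClass μ] : Continuous (cdf μ) := by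
  refine continuous_iff_continuousAt.2 fun x => ?_
  have hatom : (cdf μ).measure {x} = 0 := by rw [measure_cdf]; exact measure_singleton x
  rw [StieltjesFunction.measure_singleton, ENNReal.ofReal_eq_zero, sub_nonpos] at hatom
  have hleft : Function.leftLim (cdf μ) x = cdf μ x :=
    le_antisymm ((monotone_cdf μ).leftLim_le le_rfl) hatom
  exact continuousAt_iff_continuous_left_right.2
    ⟨continuousWithinAt_Iio_iff_Iic.1
      ((monotone_cdf μ).continuousWithinAt_Iio_iff_leftLim_eq.2 hleft), (cdf μ).right_continuous x⟩

lemma strictMono_cdf_of_absolutelyContinuous (h : volume ≪ μ) : StrictMono (cdf μ) := by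
  intro x y hxy
  have hpos : 0 < (cdf μ).measure (Ioc x y) := by
    rw [measure_cdf, pos_iff_ne_zero]
    exact fun h0 => (not_le.2 hxy) (by simpa using h h0)
  rw [StieltjesFunction.measure_Ioc, ENNReal.ofReal_pos, sub_pos] at hpos
  exact hpos

end Cdf

lemma Phi_eq_cdf : Phi = cdf (gaussianReal 0 1) := funext fun x => (cdf_eq_real _ x).symm

lemma continuous_Phi : Continuous Phi := by
  have := nullSingletonClass_gaussianReal (μ := 0) one_ne_zero
  rw [Phi_eq_cdf]; exact continuous_cdf_of_nullSingletonClass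

lemma strictMono_Phi : StrictMono Phi := by
  rw [Phi_eq_cdf]
  exact strictMono_cdf_of_absolutelyContinuous (gaussianReal_absolutelyContinuous' 0 one_ne_zero)

lemma Phi_PhiInv {u : ℝ} (hu : u ∈ Ioo (0 : ℝ) 1) : Phi (PhiInv u) = u := by
  refine Function.invFun_eq (mem_range_of_exists_le_of_exists_ge continuous_Phi ?_ ?_)
  · rw [Phi_eq_cdf]; exact ((tendsto_cdf_atBot _).eventually (eventually_le_nhds hu.1)).exists
  · rw [Phi_eq_cdf]; exact ((tendsto_cdf_atTop _).eventually (eventually_ge_nhds hu.2)).exists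

lemma lt_Phi_iff {u : ℝ} (hu : u ∈ Ioo (0 : ℝ) 1) {y : ℝ} : u < Phi y ↔ PhiInv u < y := by
  conv_lhs => rw [← Phi_PhiInv hu]
  exact strictMono_Phi.lt_iff_lt

lemma Phi_pos (x : ℝ) : 0 < Phi x :=
  (Phi_eq_cdf ▸ cdf_nonneg _ (x - 1)).trans_lt (strictMono_Phi (sub_one_lt x))

lemma Phi_lt_one (x : ℝ) : Phi x < 1 :=
  (strictMono_Phi (lt_add_one x)).trans_le (Phi_eq_cdf ▸ cdf_le_one _ (x + 1))

lemma exists_forall_ne_lt_iff_le_Athr {c ρ N R N0 R0 α : ℝ} (hρ : ρ ∈ Ioo (0 : ℝ) 1)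
    (hNR : 0 < N * (1 - R)) (k : ℕ) :
    ∃ a : ℝ, ∀ v : ℝ, v ≠ a →
      (α < k * N0 * (1 - R0) + N * (1 - R) * Phi ((c - √ρ * v) / √(1 - ρ)) ↔
        (v : EReal) ≤ Athr c ρ N R N0 R0 α k) := by
  set u := (α - k * N0 * (1 - R0)) / (N * (1 - R))
  have hlt (z : ℝ) : α < k * N0 * (1 - R0) + N * (1 - R) * Phi z ↔ u < Phi z := by
    rw [div_lt_iff₀ hNR]
    constructor <;> intro <;> linarith
  simp only [Athr, hlt]
  rcases le_or_gt u 0 with hu0 | hu0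
  · refine ⟨0, fun v _ => ?_⟩
    rw [if_pos (max_le le_rfl ((min_le_right _ _).trans hu0))]
    simpa using hu0.trans_lt (Phi_pos _)
  rcases le_or_gt 1 u with hu1 | hu1
  · refine ⟨0, fun v _ => ?_⟩
    rw [min_eq_left hu1, max_eq_right zero_le_one, if_neg one_pos.not_ge, if_pos le_rfl]
    simpa using ((Phi_lt_one _).trans_le hu1).le
  have hu : u ∈ Ioo (0 : ℝ) 1 := ⟨hu0, hu1⟩
  rw [min_eq_right hu1.le, max_eq_right hu0.le, if_neg hu0.not_ge, if_neg hu1.not_ge]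
  refine ⟨(c - √(1 - ρ) * PhiInv u) / √ρ, fun v hv => ?_⟩
  have hsρ : 0 < √ρ := Real.sqrt_pos.2 hρ.1
  have hs1ρ : 0 < √(1 - ρ) := Real.sqrt_pos.2 (sub_pos.2 hρ.2)
  rw [lt_Phi_iff hu, EReal.coe_le_coe_iff, le_iff_lt_or_eq, or_iff_left hv, lt_div_iff₀ hs1ρ,
    lt_div_iff₀ hsρ]
  constructor <;> intro <;> linarith

section Pattern

variable {Ω ι : Type*}

def patternEvent (E : ι → Set Ω) (s : Finset ι) : Set Ω := {ω | ∀ i, ω ∈ E i ↔ i ∈ s}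

lemma measurableSet_patternEvent [Countable ι] [MeasurableSpace Ω] {E : ι → Set Ω}
    (hE : ∀ i, MeasurableSet (E i)) (s : Finset ι) : MeasurableSet (patternEvent E s) :=
  (Measurable.forall fun i => (hE i).mem.iff measurable_const).setOf

lemma measure_eq_sum_measure_inter_patternEvent [Fintype ι] [MeasurableSpace Ω] (μ : Measure Ω)
    {E : ι → Set Ω} (hE : ∀ i, MeasurableSet (E i)) (S : Set Ω) :
    μ S = ∑ s : Finset ι, μ (S ∩ patternEvent E s) := by
  classical
  set occurring : Ω → Finset ι := fun ω => Finset.univ.filter (ω ∈ E ·)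
  have hfiber (s : Finset ι) : occurring ⁻¹' {s} = patternEvent E s := by
    ext ω
    simp [occurring, patternEvent, Finset.ext_iff]
  have hsum := sum_measure_preimage_singleton (μ := μ.restrict S) Finset.univ (f := occurring)
    fun s _ => hfiber s ▸ measurableSet_patternEvent hE s
  simp only [hfiber, Measure.restrict_apply (measurableSet_patternEvent hE _),
    Finset.coe_univ, preimage_univ, Measure.restrict_apply_univ] at hsum
  simp only [hsum.symm, inter_comm]

lemma sum_mul_indicator_one_of_mem_patternEvent [Fintype ι] {R : Type*} [NonAssocSemiring R]
    {E : ι → Set Ω} {s : Finset ι} {ω : Ω} (hω : ω ∈ patternEvent E s) (a : R) :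
    ∑ i, a * (E i).indicator (fun _ => (1 : R)) ω = s.card * a := by
  classical
  simp only [indicator_apply, hω _, mul_ite, mul_one, mul_zero, Finset.sum_ite_mem,
    Finset.univ_inter, Finset.sum_const, nsmul_eq_mul]

end Pattern

lemma Finset.exists_perm_mem_iff_of_card_eq {ι : Type*} [Fintype ι] [DecidableEq ι]
    {s t : Finset ι} (h : s.card = t.card) : ∃ σ : Equiv.Perm ι, ∀ i, σ i ∈ t ↔ i ∈ s := by
  refine ⟨(Finset.equivOfCardEq h).extendSubtype, fun i => ?_⟩
  by_cases hi : i ∈ s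
  · exact iff_of_true (Equiv.extendSubtype_mem _ _ hi) hi
  · exact iff_of_false (Equiv.extendSubtype_not_mem _ _ hi) hi

lemma ProbabilityTheory.iIndepFun.map_fun_precomp_eq {Ω ι β : Type*} [MeasurableSpace Ω]
    [Fintype ι] [MeasurableSpace β] {μ : Measure Ω} {f : ι → Ω → β}
    (hf : ∀ i, AEMeasurable (f i) μ) (hindep : iIndepFun f μ) {g : ι → ι} (hg : g.Injective)
    (hlaw : ∀ i, μ.map (f (g i)) = μ.map (f i)) :
    μ.map (fun ω i => f (g i) ω) = μ.map (fun ω i => f i ω) := by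
  rw [(hindep.precomp hg).map_fun_eq_pi_map fun i => hf (g i), hindep.map_fun_eq_pi_map hf]
  simp only [hlaw]

lemma measure_inter_patternEvent_eq_of_card_eq {Ω ι γ : Type*} [MeasurableSpace Ω] [Fintype ι]
    [MeasurableSpace γ] {μ : Measure Ω} {V : Ω → γ} {ξ : ι → Ω → γ}
    (hV : Measurable V) (hξ : ∀ i, Measurable (ξ i))
    (hξlaw : ∀ i j, μ.map (ξ i) = μ.map (ξ j))
    (hindep : iIndepFun (fun o : Option ι => o.elim V ξ) μ)
    {B : Set γ} (hB : MeasurableSet B) {D : Set (γ × γ)} (hD : MeasurableSet D)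
    {s t : Finset ι} (hst : s.card = t.card) :
    μ (V ⁻¹' B ∩ patternEvent (fun i => {ω | (V ω, ξ i ω) ∈ D}) s)
      = μ (V ⁻¹' B ∩ patternEvent (fun i => {ω | (V ω, ξ i ω) ∈ D}) t) := by
  classical
  obtain ⟨σ, hσ⟩ := Finset.exists_perm_mem_iff_of_card_eq hst.symm
  set f : Option ι → Ω → γ := fun o => o.elim V ξ
  have hf (o : Option ι) : Measurable (f o) := by cases o <;> simp [f, hV, hξ]
  have hmap := hindep.map_fun_precomp_eq (fun o => (hf o).aemeasurable)
    (Equiv.optionCongr σ).injective fun o => by cases o; exacts [rfl, hξlaw _ _]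
  set C : Set (Option ι → γ) := {x | x none ∈ B ∧ ∀ i, (x none, x (some i)) ∈ D ↔ i ∈ t}
  have hC : MeasurableSet C := by
    refine (measurable_pi_apply none hB).inter (Measurable.forall fun i => ?_).setOf
    exact (((measurable_pi_apply none).prodMk (measurable_pi_apply (some i))) hD).mem.iff
      measurable_const
  have hs : V ⁻¹' B ∩ patternEvent (fun i => {ω | (V ω, ξ i ω) ∈ D}) s
      = (fun ω o => f (Equiv.optionCongr σ o) ω) ⁻¹' C := by
    ext ω
    simp only [patternEvent, mem_inter_iff, mem_preimage, mem_ofPred_eq, C, f,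
      Equiv.optionCongr_apply, Option.map_none, Option.map_some, Option.elim_none,
      Option.elim_some, ← hσ]
    exact and_congr_right' (σ.forall_congr_right (q := fun j => (V ω, ξ j ω) ∈ D ↔ j ∈ s)).symm
  rw [hs, ← Measure.map_apply (measurable_pi_lambda _ fun o => hf _) hC, hmap,
    Measure.map_apply (measurable_pi_lambda _ hf) hC]
  rfl

lemma ae_ne_of_map_eq {Ω : Type*} [MeasurableSpace Ω] {μ : Measure Ω} {ν : Measure ℝ}
    [NullSingletonClass ν] {V : Ω → ℝ} (hV : Measurable V) (hVlaw : μ.map V = ν) (a : ℝ) :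
    ∀ᵐ ω ∂μ, V ω ≠ a := by
  refine (measure_eq_zero_iff_ae_notMem (s := V ⁻¹' {a})).1 ?_
  rw [← Measure.map_apply hV (measurableSet_singleton a), hVlaw, measure_singleton]

lemma measure_lt_inter_patternEvent_eq {Ω ι : Type*} [MeasurableSpace Ω] [Fintype ι]
    {μ : Measure Ω} {V : Ω → ℝ} (hV : Measurable V) (hVlaw : μ.map V = gaussianReal 0 1)
    {c ρ N R N0 R0 α : ℝ} (hρ : ρ ∈ Ioo (0 : ℝ) 1) (hNR : 0 < N * (1 - R))
    {E : ι → Set Ω} {s : Finset ι} {L : Ω → ℝ}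
    (hL : ∀ ω ∈ patternEvent E s,
      L ω = s.card * N0 * (1 - R0) + N * (1 - R) * Phi ((c - √ρ * V ω) / √(1 - ρ))) :
    μ ({ω | α < L ω} ∩ patternEvent E s)
      = μ (V ⁻¹' {v | (v : EReal) ≤ Athr c ρ N R N0 R0 α s.card} ∩ patternEvent E s) := by
  obtain ⟨a, ha⟩ := exists_forall_ne_lt_iff_le_Athr (N0 := N0) (R0 := R0) (α := α) (c := c) hρ
    hNR s.card
  have := nullSingletonClass_gaussianReal (μ := 0) one_ne_zero
  refine measure_congr (eventuallyEq_set.2 ?_)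
  filter_upwards [ae_ne_of_map_eq hV hVlaw a] with ω hω
  exact and_congr_left fun hpat => (hL ω hpat ▸ ha _ hω :)

lemma mem_patternEvent_filter_lt_iff {Ω : Type*} {n k : ℕ} {E : Fin n → Set Ω} {ω : Ω} :
    ω ∈ patternEvent E {i | (i : ℕ) < k} ↔
      ∀ i : Fin n, ((i : ℕ) < k → ω ∈ E i) ∧ (k ≤ i → ω ∉ E i) := by
  simp only [patternEvent, mem_ofPred_eq, Finset.mem_filter, Finset.mem_univ, true_and]
  refine forall_congr' fun i => ?_
  by_cases hi : (i : ℕ) < k <;> simp [hi, not_lt.1]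

theorem lhpp_loss_exceedance_prob_general
    {Ω : Type*} [MeasureSpace Ω] [IsProbabilityMeasure (ℙ : Measure Ω)]
    (n : ℕ) (V : Ω → ℝ) (ξ : Fin n → Ω → ℝ)
    (hV : Measurable V) (hξ : ∀ i, Measurable (ξ i))
    (hVlaw : Measure.map V ℙ = gaussianReal 0 1)
    (hξlaw : ∀ i, Measure.map (ξ i) ℙ = gaussianReal 0 1)
    (hindep : iIndepFun
      (fun o : Option (Fin n) => o.elim V fun i => ξ i) ℙ)
    (ρ ρ0 : ℝ) (hρ : ρ ∈ Set.Ioo (0 : ℝ) 1)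
    (c c0 : ℝ) (R R0 : ℝ) (hR : R ∈ Set.Ico (0 : ℝ) 1)
    (N N0 : ℝ) (hN : 0 < N)
    (X : Fin n → Ω → ℝ)
    (hX : ∀ i, X i = fun ω => Real.sqrt ρ0 * V ω + Real.sqrt (1 - ρ0) * ξ i ω)
    (L : Ω → ℝ)
    (hL : L = fun ω =>
      (∑ i : Fin n, N0 * (1 - R0) * Set.indicator {ω' | X i ω' ≤ c0} (fun _ => (1 : ℝ)) ω)
        + N * (1 - R) * Phi ((c - Real.sqrt ρ * V ω) / Real.sqrt (1 - ρ)))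
    (α : ℝ) :
    (ℙ {ω | α < L ω}).toReal
      = ∑ k ∈ Finset.range (n + 1), (n.choose k : ℝ) *
          (ℙ {ω | (V ω : EReal) ≤ Athr c ρ N R N0 R0 α k ∧
              ∀ i : Fin n, ((i : ℕ) < k → X i ω ≤ c0) ∧ (k ≤ (i : ℕ) → c0 < X i ω)}).toReal := by
  classical
  set D : Set (ℝ × ℝ) := {p | √ρ0 * p.1 + √(1 - ρ0) * p.2 ≤ c0}
  set E : Fin n → Set Ω := fun i => {ω | X i ω ≤ c0}
  have hE : E = fun i => {ω | (V ω, ξ i ω) ∈ D} := funext fun i => by simp only [E, hX i]; rfl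
  have hD : MeasurableSet D := measurableSet_le (by fun_prop) measurable_const
  have hEm (i : Fin n) : MeasurableSet (E i) := hE ▸ (hV.prodMk (hξ i)) hD
  set firsts : ℕ → Finset (Fin n) := fun k => {i | (i : ℕ) < k}
  set A : ℕ → Set Ω := fun k => V ⁻¹' {v | (v : EReal) ≤ Athr c ρ N R N0 R0 α k}
  have hterm (s : Finset (Fin n)) :
      ℙ ({ω | α < L ω} ∩ patternEvent E s) = ℙ (A s.card ∩ patternEvent E (firsts s.card)) := by
    have hcard : (firsts s.card).card = s.card := by
      simpa [firsts, Fin.card_filter_val_lt] using s.card_le_univ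
    rw [measure_lt_inter_patternEvent_eq hV hVlaw hρ (mul_pos hN (sub_pos.2 hR.2)) fun ω hω => ?_,
      hE]
    · exact measure_inter_patternEvent_eq_of_card_eq hV hξ
        (fun i j => (hξlaw i).trans (hξlaw j).symm) hindep
        (measurable_coe_real_ereal measurableSet_Iic) hD hcard.symm
    · rw [hL]
      show ∑ i, N0 * (1 - R0) * (E i).indicator (fun _ => (1 : ℝ)) ω + _ = _
      rw [sum_mul_indicator_one_of_mem_patternEvent hω]
      ring
  have htarget (k : ℕ) : {ω | (V ω : EReal) ≤ Athr c ρ N R N0 R0 α k ∧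
      ∀ i : Fin n, ((i : ℕ) < k → X i ω ≤ c0) ∧ (k ≤ (i : ℕ) → c0 < X i ω)}
        = A k ∩ patternEvent E (firsts k) := by
    ext ω
    simp only [A, firsts, E, mem_inter_iff, mem_preimage, mem_ofPred_eq,
      mem_patternEvent_filter_lt_iff, not_le]
  rw [measure_eq_sum_measure_inter_patternEvent ℙ hEm,
    Finset.sum_congr rfl fun s _ => hterm s, ← Finset.powerset_univ,
    Finset.sum_powerset_apply_card fun k => ℙ (A k ∩ patternEvent E (firsts k)),
    Finset.card_univ, Fintype.card_fin]
  simp only [nsmul_eq_mul]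
  rw [ENNReal.toReal_sum fun k _ => by finiteness]
  simp only [htarget, ENNReal.toReal_mul, ENNReal.toReal_natCast]

/-- **Proposition 1, LH++ model.**
`P(L > α) = ∑_{k=0}^n C(n,k) · P(V ≤ A(α,k), X_1 ≤ c_0, …, X_k ≤ c_0, X_{k+1} > c_0, …,
X_n > c_0)`. -/
theorem lhpp_loss_exceedance_prob
    {Ω : Type*} [MeasureSpace Ω] [IsProbabilityMeasure (ℙ : Measure Ω)]
    (n : ℕ) (V : Ω → ℝ) (ξ : Fin n → Ω → ℝ)
    (hV : Measurable V) (hξ : ∀ i, Measurable (ξ i))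
    (hVlaw : Measure.map V ℙ = gaussianReal 0 1)
    (hξlaw : ∀ i, Measure.map (ξ i) ℙ = gaussianReal 0 1)
    (hindep : iIndepFun
      (fun o : Option (Fin n) => o.elim V fun i => ξ i) ℙ)
    (ρ ρ0 : ℝ) (hρ : ρ ∈ Set.Ioo (0 : ℝ) 1) (hρ0 : ρ0 ∈ Set.Ioo (0 : ℝ) 1)
    (c c0 : ℝ) (R R0 : ℝ) (hR : R ∈ Set.Ico (0 : ℝ) 1) (hR0 : R0 ∈ Set.Ico (0 : ℝ) 1)
    (N N0 : ℝ) (hN : 0 < N) (hN0 : 0 < N0) (hsum : N + n * N0 = 1)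
    (X : Fin n → Ω → ℝ)
    (hX : ∀ i, X i = fun ω => Real.sqrt ρ0 * V ω + Real.sqrt (1 - ρ0) * ξ i ω)
    (L : Ω → ℝ)
    (hL : L = fun ω =>
      (∑ i : Fin n, N0 * (1 - R0) * Set.indicator {ω' | X i ω' ≤ c0} (fun _ => (1 : ℝ)) ω)
        + N * (1 - R) * Phi ((c - Real.sqrt ρ * V ω) / Real.sqrt (1 - ρ)))
    (α : ℝ) :
    (ℙ {ω | α < L ω}).toReal
      = ∑ k ∈ Finset.range (n + 1), (n.choose k : ℝ) *
          (ℙ {ω | (V ω : EReal) ≤ Athr c ρ N R N0 R0 α k ∧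
              ∀ i : Fin n, ((i : ℕ) < k → X i ω ≤ c0) ∧ (k ≤ (i : ℕ) → c0 < X i ω)}).toReal :=
  lhpp_loss_exceedance_prob_general n V ξ hV hξ hVlaw hξlaw hindep ρ ρ0 hρ c c0 R R0 hR N N0 hN X hX
    L hL α
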